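/- For coprime p, q with 0 < p < q, the function t_{p/q} = ∑_{i=1}^q (⌊(i+1)p/q⌋ - ⌊i p/q⌋) 2^{-i} is strictly increasing in p for fixed q: if p₁ < p₂ are both coprime to q, then t_{p₁/q} < t_{p₂/q}. -/
import Mathlib


noncomputable def tpq (p q : ℕ) : ℝ :=
  ∑ i ∈ Finset.Icc 1 q,
    ((⌊(((i + 1) * p : ℕ) : ℝ) / q⌋ - ⌊((i * p : ℕ) : ℝ) / q⌋ : ℤ) : ℝ) / 2 ^ i

private lemma abel_aux (f : ℕ → ℝ) :
    ∀ q : ℕ, 1 ≤ q →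
      ∑ i ∈ Finset.Icc 1 q, (f (i+1) - f i) / 2 ^ i =
        f (q+1) / 2 ^ q - f 1 / 2 + ∑ j ∈ Finset.Icc 2 q, f j / 2 ^ j := by
  intro q hq
  induction q, hq using Nat.le_induction with
  | base => simp; ring
  | succ n hn ih =>
      rw [Finset.sum_Icc_succ_top (by omega : 1 ≤ n + 1),
        Finset.sum_Icc_succ_top (by omega : 2 ≤ n + 1), ih]
      ring

private lemma tpq_eq (p q : ℕ) (hp : 0 < p) (hpq : p < q) :
    tpq p q = (p : ℝ) / 2 ^ q +
      ∑ j ∈ Finset.Icc 2 q, ((⌊((j * p : ℕ) : ℝ) / q⌋ : ℝ)) / 2 ^ j := by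
  have hq : (0 : ℝ) < q := by exact_mod_cast Nat.pos_of_ne_zero (by omega)
  have h1 : tpq p q = ∑ i ∈ Finset.Icc 1 q,
      (((⌊(((i+1) * p : ℕ) : ℝ) / q⌋ : ℝ)) - ((⌊((i * p : ℕ) : ℝ) / q⌋ : ℝ))) / 2 ^ i := by
    unfold tpq; congr 1; ext i; push_cast; ring
  rw [h1, abel_aux (fun i => ((⌊((i * p : ℕ) : ℝ) / q⌋ : ℝ))) q (by omega)]
  have hf1 : (⌊((1 * p : ℕ) : ℝ) / q⌋ : ℤ) = 0 := by
    rw [Int.floor_eq_zero_iff]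
    constructor
    · positivity
    · rw [div_lt_one hq]
      push_cast
      simp only [one_mul]
      exact_mod_cast hpq
  have hfq : (⌊(((q+1) * p : ℕ) : ℝ) / q⌋ : ℤ) = p := by
    have : ((((q+1) * p : ℕ) : ℝ)) / q = ((p : ℝ)) / q + (p : ℤ) := by
      push_cast; field_simp; ring
    have hz : (⌊((p : ℝ)) / q⌋ : ℤ) = 0 := by
      have := hf1; rwa [Nat.one_mul] at this
    rw [this, Int.floor_add_intCast, hz, zero_add]
  rw [hfq, hf1]
  push_cast
  ring

theorem stmt_9 (q p₁ p₂ : ℕ) (h12 : p₁ < p₂) (hp₁ : 0 < p₁) (hp₂ : p₂ < q)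
    (hc₁ : Nat.Coprime p₁ q) (hc₂ : Nat.Coprime p₂ q) :
    tpq p₁ q < tpq p₂ q := by
  have hq : (0 : ℝ) < q := by exact_mod_cast Nat.pos_of_ne_zero (by omega)
  rw [tpq_eq p₁ q hp₁ (by omega), tpq_eq p₂ q (by omega) hp₂]
  apply add_lt_add_of_lt_of_le
  · apply (div_lt_div_iff_of_pos_right (by positivity : (0:ℝ) < 2 ^ q)).mpr
    exact_mod_cast h12
  · apply Finset.sum_le_sum
    intro j hj
    gcongr
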